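/- arXiv:1607.04091 — 2 statements merged into one kernel-verified Lean document; each statement's English description precedes it below -/
import Mathlib

section
/- Let N₁ ≤ N ≤ M be positive integers with N₁, N even, ε > 0 with 1/ε ∈ ℕ, and set ξ_m = (ε/N)(m − 1 − M/2) for m = 1,…,M. Let q = min{p ∈ ℕ : pN/ε ≥ M} and N₂ = qN/ε. Define z ∈ ℂ^{N₂} by z_n = x_ℓ exp(πi(ℓ−1)εM/N) if n = q(ℓ−1)+1 for some 1 ≤ ℓ ≤ N₁, and z_n = 0 otherwise. Then for every m, the NDFT value y_m = Σ_{k=−N₁/2}^{N₁/2−1} x_{k+1+N₁/2} exp(−2πi k ξ_m) equals exp(πi N₁ ξ_m) Σ_{n=1}^{N₂} z_n exp(−2πi(n−1)(m−1)/N₂), i.e. a phase factor times the m-th entry of the length-N₂ DFT of z. -/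
open Complex Real Finset

/-- The NDFT with uniform sampling locations `ξ_m = (ε/N)(m−1−M/2)` reduces to a phase factor
times entries of the DFT of the zero-padded, phase-modulated vector `z` of length `N₂ = qN/ε`. -/
theorem ndft_uniform_reduces_to_dft
    (N₁ N M : ℕ) (hN₁pos : 0 < N₁) (h₁ : N₁ ≤ N) (h₂ : N ≤ M)
    (hN₁even : Even N₁) (hNeven : Even N)
    (ε : ℝ) (hε : 0 < ε) (hεinv : ∃ r : ℕ, (r : ℝ) * ε = 1)
    (ξ : ℕ → ℝ) (hξ : ∀ m : ℕ, ξ m = (ε / N) * ((m : ℝ) - 1 - (M : ℝ) / 2))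
    (q : ℕ) (hq : (q : ℝ) * N / ε ≥ M ∧ ∀ p : ℕ, (p : ℝ) * N / ε ≥ M → q ≤ p)
    (N₂ : ℕ) (hN₂ : (N₂ : ℝ) = (q : ℝ) * N / ε)
    (x z : ℕ → ℂ)
    (hz₁ : ∀ ℓ : ℕ, 1 ≤ ℓ → ℓ ≤ N₁ →
      z (q * (ℓ - 1) + 1) = x ℓ * Complex.exp (π * Complex.I * ((ℓ : ℂ) - 1) * ε * M / N))
    (hz₀ : ∀ n : ℕ, (¬ ∃ ℓ : ℕ, 1 ≤ ℓ ∧ ℓ ≤ N₁ ∧ n = q * (ℓ - 1) + 1) → z n = 0) :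
    ∀ m : ℕ, 1 ≤ m → m ≤ M →
      (∑ k ∈ Finset.Icc (-(N₁ : ℤ) / 2) ((N₁ : ℤ) / 2 - 1),
          x (k + 1 + (N₁ : ℤ) / 2).toNat * Complex.exp (-2 * π * Complex.I * (k : ℂ) * (ξ m : ℂ)))
        = Complex.exp (π * Complex.I * (N₁ : ℂ) * (ξ m : ℂ)) *
            ∑ n ∈ Finset.Icc 1 N₂,
              z n * Complex.exp (-2 * π * Complex.I * ((n : ℂ) - 1) * ((m : ℂ) - 1) / (N₂ : ℂ)) := by
  intro m hm1 hmM
  obtain ⟨r, hr⟩ := hεinv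
  obtain ⟨c, hc⟩ := hN₁even
  have hNpos : 0 < N := lt_of_lt_of_le hN₁pos h₁
  have hMpos : 0 < M := lt_of_lt_of_le hNpos h₂
  have hMR : (0:ℝ) < M := by exact_mod_cast hMpos
  have hqpos : 0 < q := by
    rcases Nat.eq_zero_or_pos q with h | h
    · exfalso
      have h1 := hq.1
      rw [h] at h1
      simp at h1
      nlinarith
    · exact h
  have hrpos : 0 < r := by
    rcases Nat.eq_zero_or_pos r with h | h
    · rw [h] at hr; simp at hr
    · exact h
  have hεle1 : ε ≤ 1 := by
    have h1 : (1:ℝ) ≤ r := by exact_mod_cast hrpos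
    nlinarith
  have hN₂ge : q * N₁ ≤ N₂ := by
    have h1 : ((q * N₁ : ℕ) : ℝ) ≤ (N₂ : ℝ) := by
      rw [hN₂]
      push_cast
      rw [le_div_iff₀ hε]
      have hN₁N : (N₁:ℝ) ≤ N := by exact_mod_cast h₁
      have hq0 : (0:ℝ) ≤ q := by positivity
      have e1 : (q:ℝ) * N₁ * ε ≤ (q:ℝ) * N₁ * 1 :=
        mul_le_mul_of_nonneg_left hεle1 (by positivity)
      have e2 : (q:ℝ) * N₁ ≤ (q:ℝ) * N := mul_le_mul_of_nonneg_left hN₁N hq0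
      linarith
    exact_mod_cast h1
  have hN₂pos : 0 < N₂ := lt_of_lt_of_le (Nat.mul_pos hqpos hN₁pos) hN₂ge
  have hNC : (N:ℂ) ≠ 0 := by exact_mod_cast hNpos.ne'
  have hN₂C : (N₂:ℂ) ≠ 0 := by exact_mod_cast hN₂pos.ne'
  have hrelR : (N₂:ℝ) * ε = (q:ℝ) * N := by
    rw [hN₂]; field_simp
  have hrel : (N₂:ℂ) * (ε:ℂ) = (q:ℂ) * (N:ℂ) := by exact_mod_cast congrArg Complex.ofReal hrelR
  have hεC : (ε:ℂ) = (q:ℂ) * (N:ℂ) / (N₂:ℂ) := by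
    rw [eq_div_iff hN₂C]; linear_combination hrel
  have hξC : ((ξ m : ℝ) : ℂ) = ((ε:ℂ) / (N:ℂ)) * ((m:ℂ) - 1 - (M:ℂ) / 2) := by
    rw [hξ]; push_cast; ring
  have hcZ : (N₁ : ℤ) = (c:ℤ) + (c:ℤ) := by exact_mod_cast hc
  have hc2 : (N₁ : ℤ) / 2 = (c:ℤ) := by omega
  have hN₁C : (N₁:ℂ) = 2 * (c:ℂ) := by
    have : (N₁:ℕ) = 2 * c := by omega
    rw [this]; push_cast; ring
  -- Step 1: reduce the sum over `Icc 1 N₂` to the support of `z`.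
  set f : ℕ → ℂ := fun n =>
    z n * Complex.exp (-2 * π * Complex.I * ((n : ℂ) - 1) * ((m : ℂ) - 1) / (N₂ : ℂ)) with hf
  have himg : (Finset.Icc 1 N₁).image (fun ℓ => q * (ℓ - 1) + 1) ⊆ Finset.Icc 1 N₂ := by
    intro n hn
    simp only [Finset.mem_image, Finset.mem_Icc] at hn ⊢
    obtain ⟨ℓ, ⟨hℓ1, hℓ2⟩, rfl⟩ := hn
    refine ⟨by omega, ?_⟩
    have h3 : q * (ℓ - 1) ≤ q * (N₁ - 1) := Nat.mul_le_mul_left q (by omega)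
    have h4 : q * (N₁ - 1) + q = q * N₁ := by
      have : N₁ - 1 + 1 = N₁ := by omega
      calc q * (N₁ - 1) + q = q * (N₁ - 1 + 1) := by ring
        _ = q * N₁ := by rw [this]
    omega
  have hstep1 : ∑ n ∈ Finset.Icc 1 N₂, f n = ∑ ℓ ∈ Finset.Icc 1 N₁, f (q * (ℓ - 1) + 1) := by
    rw [← Finset.sum_subset himg]
    · rw [Finset.sum_image]
      intro ℓ₁ h1 ℓ₂ h2 heq
      simp only [Finset.mem_coe, Finset.coe_Icc, Set.mem_Icc, Finset.mem_Icc] at h1 h2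
      have : q * (ℓ₁ - 1) = q * (ℓ₂ - 1) := by simp only at heq; omega
      have := Nat.eq_of_mul_eq_mul_left hqpos this
      omega
    · intro n hn hnim
      have : ¬ ∃ ℓ : ℕ, 1 ≤ ℓ ∧ ℓ ≤ N₁ ∧ n = q * (ℓ - 1) + 1 := by
        rintro ⟨ℓ, hℓ1, hℓ2, rfl⟩
        exact hnim (Finset.mem_image.mpr ⟨ℓ, Finset.mem_Icc.mpr ⟨hℓ1, hℓ2⟩, rfl⟩)
      simp only [hf]
      rw [hz₀ n this, zero_mul]
  rw [hstep1, Finset.mul_sum]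
  -- Step 2: reindex the NDFT sum and match terms.
  refine Finset.sum_nbij' (fun k => (k + 1 + (N₁ : ℤ) / 2).toNat)
    (fun ℓ => (ℓ : ℤ) - 1 - (N₁ : ℤ) / 2) ?_ ?_ ?_ ?_ ?_
  · intro k hk
    simp only [Finset.mem_Icc] at hk ⊢
    omega
  · intro ℓ hℓ
    simp only [Finset.mem_Icc] at hℓ ⊢
    omega
  · intro k hk
    simp only [Finset.mem_Icc] at hk
    show ((k + 1 + (N₁ : ℤ) / 2).toNat : ℤ) - 1 - (N₁ : ℤ) / 2 = k
    omega
  · intro ℓ hℓ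
    simp only [Finset.mem_Icc] at hℓ
    show ((((ℓ:ℤ) - 1 - (N₁ : ℤ) / 2) + 1 + (N₁ : ℤ) / 2).toNat) = ℓ
    omega
  · intro k hk
    simp only [Finset.mem_Icc, hc2] at hk
    set ℓ : ℕ := (k + 1 + (N₁ : ℤ) / 2).toNat with hℓdef
    have hℓZ : (ℓ : ℤ) = k + 1 + (c:ℤ) := by rw [hℓdef, hc2]; omega
    have hℓ1 : 1 ≤ ℓ := by omega
    have hℓ2 : ℓ ≤ N₁ := by omega
    have hℓC : (ℓ : ℂ) = (k : ℂ) + 1 + (c : ℂ) := by exact_mod_cast congrArg (Int.cast : ℤ → ℂ) hℓZ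
    simp only [hf]
    rw [hz₁ ℓ hℓ1 hℓ2]
    have hcast : ((q * (ℓ - 1) + 1 : ℕ) : ℂ) = (q:ℂ) * ((ℓ:ℂ) - 1) + 1 := by
      push_cast [Nat.cast_sub hℓ1]
      ring
    rw [hcast]
    have key : Complex.exp (-2 * π * Complex.I * (k : ℂ) * (ξ m : ℂ))
        = Complex.exp (π * Complex.I * (N₁ : ℂ) * (ξ m : ℂ))
          * Complex.exp (π * Complex.I * ((ℓ : ℂ) - 1) * ε * M / N)
          * Complex.exp (-2 * π * Complex.I * ((q:ℂ) * ((ℓ:ℂ) - 1) + 1 - 1) * ((m : ℂ) - 1) / (N₂ : ℂ)) := by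
      rw [← Complex.exp_add, ← Complex.exp_add]
      congr 1
      rw [hξC, hℓC, hN₁C]
      field_simp
      linear_combination (2 * ((k:ℂ) + (c:ℂ)) * (1 - (m:ℂ))) * hrel
    rw [key]
    ring
end

section
/- Under the hypotheses that U has spectral radius < 1, v₁ and v₂ are continuous, and v₁(ξ) = U v₁(ξ/2) + V v₂(ξ/2) for all ξ, one has v₁(ξ) = lim_{j→∞} ( U^j v₁(0) + Σ_{ℓ=0}^{j−1} U^ℓ V v₂(ξ/2^{ℓ+1}) ), with the series Σ_{ℓ≥0} U^ℓ V v₂(ξ/2^{ℓ+1}) converging. -/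
open Matrix Finset Filter
open scoped NNReal ENNReal Topology

attribute [local instance] Matrix.linftyOpNormedAddCommGroup Matrix.linftyOpNormedSpace
  Matrix.linftyOpNormedRing Matrix.linftyOpNormedAlgebra

/-- If the spectral radius of a matrix is `< 1`, its powers are eventually bounded by a
geometric sequence with ratio `< 1`. -/
lemma pow_norm_eventually_le_geometric {p : ℕ} (U : Matrix (Fin p) (Fin p) ℂ)
    (hU : spectralRadius ℂ U < 1) :
    ∃ r : ℝ≥0, (r : ℝ) < 1 ∧ ∀ᶠ n in atTop, ‖U ^ n‖ ≤ (r : ℝ) ^ n := by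
  obtain ⟨L, hL1, hL2⟩ := exists_between hU
  have hLne : L ≠ ⊤ := (hL2.trans ENNReal.one_lt_top).ne
  set r : ℝ≥0 := L.toNNReal with hr
  have hrL : (r : ℝ≥0∞) = L := ENNReal.coe_toNNReal hLne
  refine ⟨r, ?_, ?_⟩
  · have : (r : ℝ≥0∞) < 1 := hrL ▸ hL2
    exact_mod_cast this
  · have hG := spectrum.pow_nnnorm_pow_one_div_tendsto_nhds_spectralRadius U
    have hev : ∀ᶠ n : ℕ in atTop, (‖U ^ n‖₊ : ℝ≥0∞) ^ (1 / (n : ℝ)) < L :=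
      hG.eventually_lt_const hL1
    filter_upwards [hev, eventually_ge_atTop 1] with n h hn
    have hn0 : (n : ℝ) ≠ 0 := by positivity
    have key : (‖U ^ n‖₊ : ℝ≥0∞) ≤ L ^ (n : ℝ) := by
      calc (‖U ^ n‖₊ : ℝ≥0∞) = ((‖U ^ n‖₊ : ℝ≥0∞) ^ (1 / (n : ℝ))) ^ (n : ℝ) := by
            rw [← ENNReal.rpow_mul, one_div, inv_mul_cancel₀ hn0, ENNReal.rpow_one]
        _ ≤ L ^ (n : ℝ) := ENNReal.rpow_le_rpow h.le (by positivity)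
    rw [← hrL, ← ENNReal.coe_rpow_of_nonneg _ (by positivity),
      ENNReal.coe_le_coe, NNReal.rpow_natCast] at key
    calc ‖U ^ n‖ = ((‖U ^ n‖₊ : ℝ≥0) : ℝ) := rfl
      _ ≤ ((r ^ n : ℝ≥0) : ℝ) := by exact_mod_cast key
      _ = (r : ℝ) ^ n := by push_cast; ring

/-- Under the spectral radius condition, `v₁(ξ)` is the limit of the iterated expansion
`U^j v₁(0) + Σ_{ℓ<j} U^ℓ V v₂(ξ/2^{ℓ+1})`, and the series converges. -/
theorem boundary_refinement_limit (p : ℕ)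
    (U : Matrix (Fin p) (Fin p) ℂ) (hU : spectralRadius ℂ U < 1)
    (V : Matrix (Fin p) (Fin (2 * p - 1)) ℂ)
    (v₁ : ℝ → Fin p → ℂ) (hv₁ : Continuous v₁)
    (v₂ : ℝ → Fin (2 * p - 1) → ℂ) (hv₂ : Continuous v₂)
    (hrec : ∀ ξ : ℝ, v₁ ξ = U *ᵥ v₁ (ξ / 2) + V *ᵥ v₂ (ξ / 2)) (ξ : ℝ) :
    Summable (fun ℓ : ℕ => (U ^ ℓ) *ᵥ (V *ᵥ v₂ (ξ / 2 ^ (ℓ + 1)))) ∧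
    Tendsto
      (fun j : ℕ => (U ^ j) *ᵥ v₁ 0
        + ∑ ℓ ∈ Finset.range j, (U ^ ℓ) *ᵥ (V *ᵥ v₂ (ξ / 2 ^ (ℓ + 1))))
      atTop (nhds (v₁ ξ)) := by
  obtain ⟨r, hr1, hrev⟩ := pow_norm_eventually_le_geometric U hU
  have hr0 : (0:ℝ) ≤ r := r.coe_nonneg
  -- the scaled arguments tend to zero
  have hargs : Tendsto (fun n : ℕ => ξ / 2 ^ (n + 1)) atTop (𝓝 0) := by
    have h2 : Tendsto (fun n : ℕ => ((2:ℝ) ^ (n+1))) atTop atTop :=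
      (tendsto_pow_atTop_atTop_of_one_lt one_lt_two).comp (tendsto_add_atTop_nat 1)
    simpa using (tendsto_const_nhds.div_atTop h2 : Tendsto (fun n : ℕ => ξ / 2 ^ (n+1)) atTop (𝓝 0))
  -- boundedness of the vector sequence
  have hw : Tendsto (fun n : ℕ => V *ᵥ v₂ (ξ / 2 ^ (n + 1))) atTop (𝓝 (V *ᵥ v₂ 0)) := by
    have : Tendsto (fun n : ℕ => v₂ (ξ / 2 ^ (n + 1))) atTop (𝓝 (v₂ 0)) :=
      (hv₂.tendsto 0).comp hargs
    exact ((continuous_const.matrix_mulVec continuous_id).tendsto (v₂ 0)).comp this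
  obtain ⟨C, hC0, hC⟩ := hw.norm.bddAbove_range.exists_ge 0
  have hCb : ∀ n : ℕ, ‖V *ᵥ v₂ (ξ / 2 ^ (n + 1))‖ ≤ C := fun n => hC _ ⟨n, rfl⟩
  -- summability
  have hgeo : Summable (fun n : ℕ => (r : ℝ) ^ n * C) :=
    (summable_geometric_of_lt_one hr0 hr1).mul_right C
  have hnormU : ∀ n : ℕ, ∀ w : Fin p → ℂ, ‖(U ^ n) *ᵥ w‖ ≤ ‖U ^ n‖ * ‖w‖ := fun n w =>
    Matrix.linfty_opNorm_mulVec _ _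
  have hsum : Summable (fun ℓ : ℕ => (U ^ ℓ) *ᵥ (V *ᵥ v₂ (ξ / 2 ^ (ℓ + 1)))) := by
    refine Summable.of_norm_bounded_eventually_nat (g := fun n => (r:ℝ) ^ n * C) hgeo ?_
    filter_upwards [hrev] with n hn
    calc ‖(U ^ n) *ᵥ (V *ᵥ v₂ (ξ / 2 ^ (n + 1)))‖ ≤ ‖U ^ n‖ * ‖V *ᵥ v₂ (ξ / 2 ^ (n + 1))‖ :=
          hnormU n _
      _ ≤ (r:ℝ) ^ n * C := by
          apply mul_le_mul hn (hCb n) (norm_nonneg _) (by positivity)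
  refine ⟨hsum, ?_⟩
  -- key identity
  have key : ∀ j : ℕ, v₁ ξ = (U ^ j) *ᵥ v₁ (ξ / 2 ^ j)
      + ∑ ℓ ∈ Finset.range j, (U ^ ℓ) *ᵥ (V *ᵥ v₂ (ξ / 2 ^ (ℓ + 1))) := by
    intro j
    induction j with
    | zero => simp
    | succ j ih =>
      have hstep : v₁ (ξ / 2 ^ j) = U *ᵥ v₁ (ξ / 2 ^ (j + 1)) + V *ᵥ v₂ (ξ / 2 ^ (j + 1)) := by
        have := hrec (ξ / 2 ^ j)
        rwa [div_div, ← pow_succ] at this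
      rw [ih, hstep, Matrix.mulVec_add, Matrix.mulVec_mulVec, ← pow_succ,
        Finset.sum_range_succ]
      abel
  -- rewrite the sequence
  have heq : ∀ j : ℕ, (U ^ j) *ᵥ v₁ 0
      + ∑ ℓ ∈ Finset.range j, (U ^ ℓ) *ᵥ (V *ᵥ v₂ (ξ / 2 ^ (ℓ + 1)))
      = v₁ ξ + (U ^ j) *ᵥ (v₁ 0 - v₁ (ξ / 2 ^ j)) := by
    intro j
    rw [Matrix.mulVec_sub]
    have := key j
    rw [this]
    abel
  simp only [heq]
  -- the error term tends to zero
  have herr : Tendsto (fun j : ℕ => (U ^ j) *ᵥ (v₁ 0 - v₁ (ξ / 2 ^ j))) atTop (𝓝 0) := by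
    have hargs' : Tendsto (fun n : ℕ => ξ / 2 ^ n) atTop (𝓝 0) := by
      have h2 : Tendsto (fun n : ℕ => ((2:ℝ) ^ n)) atTop atTop :=
        tendsto_pow_atTop_atTop_of_one_lt one_lt_two
      simpa using (tendsto_const_nhds.div_atTop h2 : Tendsto (fun n : ℕ => ξ / 2 ^ n) atTop (𝓝 0))
    have hdiff : Tendsto (fun j : ℕ => v₁ 0 - v₁ (ξ / 2 ^ j)) atTop (𝓝 (v₁ 0 - v₁ 0)) :=
      tendsto_const_nhds.sub ((hv₁.tendsto 0).comp hargs')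
    rw [sub_self] at hdiff
    obtain ⟨D, hD0, hD⟩ := hdiff.norm.bddAbove_range.exists_ge 0
    have hDb : ∀ j : ℕ, ‖v₁ 0 - v₁ (ξ / 2 ^ j)‖ ≤ D := fun j => hD _ ⟨j, rfl⟩
    refine squeeze_zero_norm' (a := fun j => (r:ℝ) ^ j * D) ?_ ?_
    · filter_upwards [hrev] with j hj
      calc ‖(U ^ j) *ᵥ (v₁ 0 - v₁ (ξ / 2 ^ j))‖ ≤ ‖U ^ j‖ * ‖v₁ 0 - v₁ (ξ / 2 ^ j)‖ := hnormU j _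
        _ ≤ (r:ℝ) ^ j * D := mul_le_mul hj (hDb j) (norm_nonneg _) (by positivity)
    · simpa using (tendsto_pow_atTop_nhds_zero_of_lt_one hr0 hr1).mul_const D
  have := tendsto_const_nhds.add herr (f := fun _ : ℕ => v₁ ξ) (x := atTop)
  simpa using this
end
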